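/- arXiv:1306.1018 — 2 statements merged into one kernel-verified Lean document; each statement's English description precedes it below -/
import Mathlib

section
/- Let ω be a weight, φ an analytic self-map of 𝔻, and f an analytic function on 𝔻 with f ∘ φ ∈ H_ω. Then ‖C_φ f‖²_{H_ω} = |f(φ(0))|² + ∫_𝔻 |f′(z)|² N_{φ,ω}(z) dA(z). -/
open MeasureTheory Complex Metric Set Filter
open scoped ENNReal InnerProductSpace

noncomputable section

/-- The open unit disk in the complex plane. -/
def unitDisk : Set ℂ := Metric.ball 0 1

/-- The normalized area measure `dA` on `ℂ`. -/
def dA : Measure ℂ := (ENNReal.ofReal Real.pi)⁻¹ • volume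

/-- The radial extension of a function on `[0,1)` to the disk: `ω(z) = ω(|z|)`. -/
def radial (ω : ℝ → ℝ) (z : ℂ) : ℝ := ω ‖z‖

/-- A weight: a positive function on `[0,1)`, of class `C²`, integrable. -/
structure IsWeight (ω : ℝ → ℝ) : Prop where
  pos : ∀ r ∈ Set.Ico (0:ℝ) 1, 0 < ω r
  smooth : ContDiffOn ℝ 2 ω (Set.Ico (0:ℝ) 1)
  integrable : IntegrableOn ω (Set.Ico (0:ℝ) 1)

/-- An admissible weight: conditions (W1)–(W4). -/
structure IsAdmissibleWeight (ω : ℝ → ℝ) extends IsWeight ω : Prop where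
  W1 : AntitoneOn ω (Set.Ico (0:ℝ) 1)
  W2 : ∃ δ > (0:ℝ), MonotoneOn (fun r => ω r * (1 - r) ^ (-(1 + δ))) (Set.Ico (0:ℝ) 1)
  W3 : Tendsto ω (nhdsWithin 1 (Set.Iio 1)) (nhds 0)
  W4 : (ConvexOn ℝ (Set.Ico (0:ℝ) 1) ω ∧ Tendsto (deriv ω) (nhdsWithin 1 (Set.Iio 1)) (nhds 0))
        ∨ ConcaveOn ℝ (Set.Ico (0:ℝ) 1) ω

/-- The (L1) condition of Lusky. -/
def L1Condition (ω : ℝ → ℝ) : Prop :=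
  0 < ⨅ k : ℕ, ω (1 - 2 ^ (-(k:ℝ) - 1)) / ω (1 - 2 ^ (-(k:ℝ)))

/-- The generalized Nevanlinna counting function `N_{φ,ω}(z) = ∑_{a ∈ φ⁻¹(z)} ω(a)`. -/
def Nevanlinna (ω : ℝ → ℝ) (φ : ℂ → ℂ) (z : ℂ) : ℝ :=
  ∑' a : {w : ℂ // w ∈ unitDisk ∧ φ w = z}, radial ω (a : ℂ)

/-- Membership in the weighted Hilbert space `H_ω`. -/
def memHω (ω : ℝ → ℝ) (f : ℂ → ℂ) : Prop :=
  DifferentiableOn ℂ f unitDisk ∧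
    IntegrableOn (fun z => ‖deriv f z‖ ^ 2 * radial ω z) unitDisk dA

/-- The squared norm on the weighted Hilbert space `H_ω`. -/
def HωNormSq (ω : ℝ → ℝ) (f : ℂ → ℂ) : ℝ :=
  ‖f 0‖ ^ 2 + ∫ z in unitDisk, ‖deriv f z‖ ^ 2 * radial ω z ∂dA

/-- Membership in the weighted Bergman space `A²_ω`. -/
def memAω (ω : ℝ → ℝ) (f : ℂ → ℂ) : Prop :=
  DifferentiableOn ℂ f unitDisk ∧
    IntegrableOn (fun z => ‖f z‖ ^ 2 * radial ω z) unitDisk dA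

/-- The squared norm on the weighted Bergman space `A²_ω`. -/
def AωNormSq (ω : ℝ → ℝ) (f : ℂ → ℂ) : ℝ :=
  ∫ z in unitDisk, ‖f z‖ ^ 2 * radial ω z ∂dA

/-- `ω_n`: with `ω_0 = 1` and `ω_n = 2 n² ∫₀¹ r^{2n-1} ω(r) dr` for `n ≥ 1`. -/
def ωSeq (ω : ℝ → ℝ) (n : ℕ) : ℝ :=
  if n = 0 then 1 else 2 * (n:ℝ) ^ 2 * ∫ r in (0:ℝ)..1, r ^ (2 * n - 1) * ω r

/-- `p_n = 2 ∫₀¹ r^{2n+1} ω(r) dr`. -/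
def pSeq (ω : ℝ → ℝ) (n : ℕ) : ℝ := 2 * ∫ r in (0:ℝ)..1, r ^ (2 * n + 1) * ω r

/-- The filter of `z ∈ ℂ` with `|z| → 1⁻`. -/
def boundaryFilter : Filter ℂ := Filter.comap (fun z : ℂ => ‖z‖) (nhdsWithin 1 (Set.Iio 1))

/-- The Möbius transformation `σ_a(z) = (a - z)/(1 - ā z)`. -/
def mobius (a z : ℂ) : ℂ := (a - z) / (1 - (starRingEnd ℂ) a * z)

/-- The pseudohyperbolic disk `Δ(a,r)`. -/
def pseudoDisk (a : ℂ) (r : ℝ) : Set ℂ := {z ∈ unitDisk | ‖mobius a z‖ < r}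

/-- The hyperbolic measure `dλ(z) = (1-|z|²)⁻² dA(z)`. -/
def hyperbolicMeasure : Measure ℂ :=
  dA.withDensity fun z => ENNReal.ofReal (((1 - ‖z‖ ^ 2) ^ 2)⁻¹)

/-- The essential norm of an operator: its distance to the compact operators. -/
def essNorm {H : Type} [NormedAddCommGroup H] [InnerProductSpace ℂ H] (T : H →L[ℂ] H) : ℝ :=
  sInf {r : ℝ | ∃ K : H →L[ℂ] H, IsCompactOperator ⇑K ∧ r = ‖T - K‖}

/-- A Hilbert–Schmidt operator: `∑ ‖T eₙ‖² < ∞` for every orthonormal basis. -/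
def IsHilbertSchmidt {H : Type} [NormedAddCommGroup H] [InnerProductSpace ℂ H]
    (T : H →L[ℂ] H) : Prop :=
  ∀ (I : Type) (b : HilbertBasis I ℂ H), Summable fun i => ‖T (b i)‖ ^ 2

/-- The `n`-th approximation number of `T` (equal to the `n`-th singular value). -/
def approxNumber {H : Type} [NormedAddCommGroup H] [InnerProductSpace ℂ H]
    (T : H →L[ℂ] H) (n : ℕ) : ℝ :=
  sInf {r : ℝ | ∃ F : H →L[ℂ] H, Module.rank ℂ (LinearMap.range (F : H →ₗ[ℂ] H)) ≤ n ∧ r = ‖T - F‖}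

/-- Membership in the Schatten class `S_p`: `T` is compact with `p`-summable singular values. -/
def MemSchatten {H : Type} [NormedAddCommGroup H] [InnerProductSpace ℂ H]
    (p : ℝ) (T : H →L[ℂ] H) : Prop :=
  IsCompactOperator ⇑T ∧ Summable fun n => approxNumber T n ^ p

/-!
The identity is the area formula (change of variables counted with multiplicity) for `φ`,
combined with the chain rule `(f ∘ φ)' = (f' ∘ φ) φ'`. As a real map, `φ` has Jacobian
`|φ'|²`. Off the critical points of `φ`, the inverse function theorem cuts the disk into countably
many measurable pieces on which `φ` is injective; on each piece the injective change of variables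
applies, and summing over the pieces counts every preimage of `w` once, which yields `N_{φ,ω}(w)`.
The critical points contribute nothing: there `|φ'|² = 0`, and their image is Lebesgue-null
(the easy half of Sard's theorem), so almost every `w` has all its preimages among the pieces.
-/

open scoped Topology
open Function (onFun)

def preimageSum {α β : Type*} (s : Set α) (f : α → β) (h : α → ℝ≥0∞) (y : β) : ℝ≥0∞ :=
  ∑' x : ↥(s ∩ f ⁻¹' {y}), h x

section preimageSum

variable {α β : Type*} {s : Set α} {f : α → β} {h : α → ℝ≥0∞}

theorem preimageSum_comp_mul (g : β → ℝ≥0∞) (y : β) :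
    preimageSum s f (fun x => g (f x) * h x) y = g y * preimageSum s f h y := by
  rw [preimageSum, preimageSum, ← ENNReal.tsum_mul_left]
  exact tsum_congr fun x => by rw [x.2.2]

theorem preimageSum_eq_zero_of_notMem_image {y : β} (hy : y ∉ f '' s) :
    preimageSum s f h y = 0 := by
  have : s ∩ f ⁻¹' {y} = ∅ :=
    eq_empty_iff_forall_notMem.2 fun x hx => hy ⟨x, hx.1, hx.2⟩
  rw [preimageSum, this, tsum_empty]

theorem preimageSum_apply_of_injOn (hf : InjOn f s) {x : α} (hx : x ∈ s) :
    preimageSum s f h (f x) = h x := by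
  have : s ∩ f ⁻¹' {f x} = {x} :=
    Subset.antisymm (fun x' hx' => hf hx'.1 hx hx'.2) (singleton_subset_iff.2 ⟨hx, rfl⟩)
  rw [preimageSum, this, tsum_singleton]

theorem preimageSum_iUnion {A : ℕ → Set α} (hA : Pairwise (onFun Disjoint A)) (y : β) :
    preimageSum (⋃ n, A n) f h y = ∑' n, preimageSum (A n) f h y := by
  rw [preimageSum, iUnion_inter]
  exact ENNReal.tsum_biUnion fun m _ n _ hmn =>
    (hA hmn).mono inter_subset_left inter_subset_left

theorem preimageSum_eq_extend (hf : InjOn f s) :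
    preimageSum s f h = Function.extend (s.domRestrict f) (s.domRestrict h) 0 := by
  funext y
  by_cases hy : y ∈ f '' s
  · obtain ⟨x, hx, rfl⟩ := hy
    rw [preimageSum_apply_of_injOn hf hx]
    exact ((injOn_iff_injective.1 hf).extend_apply (s.domRestrict h) 0 ⟨x, hx⟩).symm
  · rw [preimageSum_eq_zero_of_notMem_image hy, Function.extend_apply']
    · rfl
    · rintro ⟨x, hx⟩
      exact hy ⟨x, x.2, hx⟩

end preimageSum

theorem measurable_preimageSum_of_injOn {X Y : Type*} [TopologicalSpace X] [PolishSpace X]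
    [MeasurableSpace X] [BorelSpace X] [TopologicalSpace Y] [T2Space Y] [MeasurableSpace Y]
    [BorelSpace Y]
    {A : Set X} {f : X → Y} {h : X → ℝ≥0∞} (hA : MeasurableSet A) (hcont : ContinuousOn f A)
    (hinj : InjOn f A) (hh : Measurable (A.domRestrict h)) : Measurable (preimageSum A f h) := by
  rw [preimageSum_eq_extend hinj]
  exact (hcont.measurableEmbedding hA hinj).measurable_extend hh measurable_const

theorem exists_nat_cover_isOpen_injOn {X Y : Type*} [TopologicalSpace X]
    [SecondCountableTopology X] {f : X → Y} {S : Set X}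
    (hS : ∀ x ∈ S, ∃ U ∈ 𝓝 x, InjOn f U) :
    ∃ V : ℕ → Set X, (∀ n, IsOpen (V n)) ∧ (∀ n, InjOn f (V n)) ∧ S ⊆ ⋃ n, V n := by
  have hloc : ∀ x, ∃ V : Set X, IsOpen V ∧ InjOn f V ∧ (x ∈ S → x ∈ V) := by
    intro x
    by_cases hx : x ∈ S
    · obtain ⟨U, hU, hinj⟩ := hS x hx
      exact ⟨interior U, isOpen_interior, hinj.mono interior_subset,
        fun _ => mem_interior_iff_mem_nhds.2 hU⟩
    · exact ⟨∅, isOpen_empty, injOn_empty f, fun h => absurd h hx⟩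
  choose V hVo hVinj hxV using hloc
  obtain ⟨t, -, htc, hSt⟩ := TopologicalSpace.countable_cover_nhdsWithin (s := S)
    fun x hx => mem_nhdsWithin_of_mem_nhds ((hVo x).mem_nhds (hxV x hx))
  rcases S.eq_empty_or_nonempty with rfl | ⟨x₀, -⟩
  · exact ⟨fun _ => ∅, fun _ => isOpen_empty, fun _ => injOn_empty f, empty_subset _⟩
  have : Nonempty X := ⟨x₀⟩
  obtain ⟨g, hg⟩ := countable_iff_exists_subset_range.1 htc
  refine ⟨V ∘ g, fun n => hVo _, fun n => hVinj _, hSt.trans (iUnion₂_subset fun x hx => ?_)⟩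
  obtain ⟨n, rfl⟩ := hg hx
  exact subset_iUnion (V ∘ g) n

theorem HasStrictFDerivAt.exists_mem_nhds_injOn {E : Type*} [NormedAddCommGroup E]
    [NormedSpace ℝ E] [FiniteDimensional ℝ E] {f : E → E} {f' : E →L[ℝ] E} {x : E}
    (hf : HasStrictFDerivAt f f' x) (hdet : f'.det ≠ 0) : ∃ U ∈ 𝓝 x, InjOn f U := by
  rw [← f'.coe_toContinuousLinearEquivOfDetNeZero hdet] at hf
  exact ⟨_, hf.eventually_left_inverse, fun a ha b hb hab => by
    rw [← ha.out, ← hb.out, hab]⟩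

section AreaFormula

variable {E : Type*} [NormedAddCommGroup E] [NormedSpace ℝ E] [FiniteDimensional ℝ E]
  [MeasurableSpace E] [BorelSpace E] (μ : Measure E) [μ.IsAddHaarMeasure]
  {s : Set E} {f : E → E} {f' : E → E →L[ℝ] E} {h : E → ℝ≥0∞}

theorem exists_injOn_partition_of_hasStrictFDerivAt (hs : MeasurableSet s)
    (hf' : ∀ x ∈ s, HasStrictFDerivAt f (f' x) x) :
    ∃ A : ℕ → Set E, (∀ n, MeasurableSet (A n)) ∧ Pairwise (onFun Disjoint A) ∧
      (∀ n, A n ⊆ s) ∧ (∀ n, InjOn f (A n)) ∧ ∀ x ∈ s \ ⋃ n, A n, (f' x).det = 0 := by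
  obtain ⟨V, hVo, hVinj, hcover⟩ := exists_nat_cover_isOpen_injOn (f := f)
    (S := {x ∈ s | (f' x).det ≠ 0}) fun x hx => (hf' x hx.1).exists_mem_nhds_injOn hx.2
  refine ⟨disjointed fun n => V n ∩ s,
    MeasurableSet.disjointed fun n => (hVo n).measurableSet.inter hs, disjoint_disjointed _,
    fun n => (disjointed_subset _ n).trans inter_subset_right,
    fun n => (hVinj n).mono ((disjointed_subset _ n).trans inter_subset_left), ?_⟩
  rintro x ⟨hxs, hxA⟩
  by_contra hdet
  obtain ⟨n, hn⟩ := mem_iUnion.1 (hcover ⟨hxs, hdet⟩)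
  rw [iUnion_disjointed] at hxA
  exact hxA (mem_iUnion.2 ⟨n, hn, hxs⟩)

theorem lintegral_preimageSum_of_injOn {A : Set E} (hA : MeasurableSet A)
    (hf' : ∀ x ∈ A, HasFDerivWithinAt f (f' x) A x) (hinj : InjOn f A) :
    ∫⁻ y, preimageSum A f h y ∂μ = ∫⁻ x in A, ENNReal.ofReal |(f' x).det| * h x ∂μ := by
  rw [← setLIntegral_eq_of_support_subset (s := f '' A) fun y hy => by_contra fun hyA =>
      hy (preimageSum_eq_zero_of_notMem_image hyA),
    lintegral_image_eq_lintegral_abs_det_fderiv_mul μ hA hf' hinj]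
  exact setLIntegral_congr_fun hA fun x hx => by rw [preimageSum_apply_of_injOn hinj hx]

theorem preimageSum_ae_eq_of_det_eq_zero {B : Set E} (hBs : B ⊆ s)
    (hf' : ∀ x ∈ s \ B, HasFDerivWithinAt f (f' x) (s \ B) x)
    (hcrit : ∀ x ∈ s \ B, (f' x).det = 0) : preimageSum s f h =ᵐ[μ] preimageSum B f h := by
  refine measure_mono_null (fun y hy => ?_)
    (addHaar_image_eq_zero_of_det_fderivWithin_eq_zero μ hf' hcrit)
  by_contra hyB
  refine hy ?_
  have : s ∩ f ⁻¹' {y} = B ∩ f ⁻¹' {y} :=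
    Subset.antisymm (fun x hx => ⟨by_contra fun hxB => hyB ⟨x, ⟨hx.1, hxB⟩, hx.2⟩, hx.2⟩)
      (inter_subset_inter_left _ hBs)
  change preimageSum s f h y = preimageSum B f h y
  rw [preimageSum, preimageSum, this]

theorem preimageSum_ae_eq_tsum {A : ℕ → Set E} (hAd : Pairwise (onFun Disjoint A))
    (hAs : ∀ n, A n ⊆ s) (hf' : ∀ x ∈ s, HasStrictFDerivAt f (f' x) x)
    (hcrit : ∀ x ∈ s \ ⋃ n, A n, (f' x).det = 0) :
    preimageSum s f h =ᵐ[μ] fun y => ∑' n, preimageSum (A n) f h y := by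
  rw [← funext (preimageSum_iUnion hAd)]
  exact preimageSum_ae_eq_of_det_eq_zero μ (iUnion_subset hAs)
    (fun x hx => (hf' x hx.1).hasFDerivAt.hasFDerivWithinAt) hcrit

theorem aemeasurable_preimageSum (hs : MeasurableSet s)
    (hf' : ∀ x ∈ s, HasStrictFDerivAt f (f' x) x) (hh : Measurable (s.domRestrict h)) :
    AEMeasurable (preimageSum s f h) μ := by
  obtain ⟨A, hAm, hAd, hAs, hAinj, hcrit⟩ := exists_injOn_partition_of_hasStrictFDerivAt hs hf'
  refine (Measurable.tsum fun n => ?_).aemeasurable.congr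
    (preimageSum_ae_eq_tsum μ hAd hAs hf' hcrit).symm
  exact measurable_preimageSum_of_injOn (hAm n)
    (fun x hx => (hf' x (hAs n hx)).continuousAt.continuousWithinAt) (hAinj n)
    (hh.comp (measurable_inclusion (hAs n)))

theorem lintegral_abs_det_fderiv_mul_eq_lintegral_preimageSum (hs : MeasurableSet s)
    (hf' : ∀ x ∈ s, HasStrictFDerivAt f (f' x) x) (hh : Measurable (s.domRestrict h)) :
    ∫⁻ x in s, ENNReal.ofReal |(f' x).det| * h x ∂μ = ∫⁻ y, preimageSum s f h y ∂μ := by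
  obtain ⟨A, hAm, hAd, hAs, hAinj, hcrit⟩ := exists_injOn_partition_of_hasStrictFDerivAt hs hf'
  have hBm : MeasurableSet (⋃ n, A n) := MeasurableSet.iUnion hAm
  have hpieces : ∀ n, Measurable (preimageSum (A n) f h) := fun n =>
    measurable_preimageSum_of_injOn (hAm n)
      (fun x hx => (hf' x (hAs n hx)).continuousAt.continuousWithinAt) (hAinj n)
      (hh.comp (measurable_inclusion (hAs n)))
  calc ∫⁻ x in s, ENNReal.ofReal |(f' x).det| * h x ∂μ
      = ∫⁻ x in ⋃ n, A n, ENNReal.ofReal |(f' x).det| * h x ∂μ := by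
        rw [← union_sdiff_cancel (iUnion_subset hAs), lintegral_union (hs.diff hBm)
          disjoint_sdiff_right, setLIntegral_congr_fun (hs.diff hBm) (g := fun _ => 0)
          fun x hx => by simp [hcrit x hx], lintegral_zero, add_zero]
    _ = ∑' n, ∫⁻ y, preimageSum (A n) f h y ∂μ := by
        rw [lintegral_iUnion hAm hAd]
        exact tsum_congr fun n => (lintegral_preimageSum_of_injOn μ (hAm n)
          (fun x hx => (hf' x (hAs n hx)).hasFDerivAt.hasFDerivWithinAt) (hAinj n)).symm
    _ = ∫⁻ y, preimageSum s f h y ∂μ := by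
        rw [← lintegral_tsum fun n => (hpieces n).aemeasurable]
        exact lintegral_congr_ae (preimageSum_ae_eq_tsum μ hAd hAs hf' hcrit).symm

end AreaFormula

theorem ContinuousLinearMap.det_restrictScalars_toSpanSingleton (c : ℂ) :
    ((toSpanSingleton ℂ c).restrictScalars ℝ).det = ‖c‖ ^ 2 := by
  simp [ContinuousLinearMap.det, LinearMap.det_restrictScalars, Algebra.norm_complex_eq,
    Complex.normSq_eq_norm_sq]

theorem hasStrictFDerivAt_restrictScalars_of_differentiableOn {U : Set ℂ} (hU : IsOpen U)
    {φ : ℂ → ℂ} (hφ : DifferentiableOn ℂ φ U) {z : ℂ} (hz : z ∈ U) :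
    HasStrictFDerivAt φ ((ContinuousLinearMap.toSpanSingleton ℂ (deriv φ z)).restrictScalars ℝ) z :=
  ((hφ.analyticOnNhd hU z hz).hasStrictDerivAt.hasStrictFDerivAt).restrictScalars ℝ

section Holomorphic

variable (μ : Measure ℂ) [μ.IsAddHaarMeasure] {U : Set ℂ} {φ : ℂ → ℂ} {W : ℂ → ℝ≥0∞}

theorem aemeasurable_preimageSum_of_differentiableOn (hU : IsOpen U)
    (hφ : DifferentiableOn ℂ φ U) (hW : Measurable (U.domRestrict W)) :
    AEMeasurable (preimageSum U φ W) μ :=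
  aemeasurable_preimageSum μ hU.measurableSet
    (fun _ hz => hasStrictFDerivAt_restrictScalars_of_differentiableOn hU hφ hz) hW

theorem lintegral_comp_mul_norm_deriv_sq_mul (hU : IsOpen U) (hφ : DifferentiableOn ℂ φ U)
    {G : ℂ → ℝ≥0∞} (hG : Measurable G) (hW : Measurable (U.domRestrict W)) :
    ∫⁻ z in U, G (φ z) * ENNReal.ofReal (‖deriv φ z‖ ^ 2) * W z ∂μ =
      ∫⁻ w, G w * preimageSum U φ W w ∂μ := by
  have hφm : Measurable (U.domRestrict φ) :=
    (continuousOn_iff_continuous_domRestrict.1 hφ.continuousOn).measurable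
  simp_rw [← preimageSum_comp_mul]
  rw [← lintegral_abs_det_fderiv_mul_eq_lintegral_preimageSum μ hU.measurableSet
    (fun _ hz => hasStrictFDerivAt_restrictScalars_of_differentiableOn hU hφ hz)
    (h := fun z => G (φ z) * W z) ((hG.comp hφm).mul hW)]
  refine setLIntegral_congr_fun hU.measurableSet fun z _ => ?_
  rw [ContinuousLinearMap.det_restrictScalars_toSpanSingleton, abs_of_nonneg (by positivity)]
  ring

end Holomorphic

theorem lintegral_ofReal_norm_deriv_comp_sq_mul (μ : Measure ℂ) [μ.IsAddHaarMeasure]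
    {U V : Set ℂ} (hU : IsOpen U) (hV : IsOpen V) {f φ : ℂ → ℂ} (hf : DifferentiableOn ℂ f V)
    (hφ : DifferentiableOn ℂ φ U) (hφUV : MapsTo φ U V) {W : ℂ → ℝ}
    (hW : Measurable (U.domRestrict W)) :
    ∫⁻ z in U, ENNReal.ofReal (‖deriv (f ∘ φ) z‖ ^ 2 * W z) ∂μ =
      ∫⁻ w in V, ENNReal.ofReal (‖deriv f w‖ ^ 2) *
        preimageSum U φ (fun z => ENNReal.ofReal (W z)) w ∂μ := by
  have hG : Measurable fun w => ENNReal.ofReal (‖deriv f w‖ ^ 2) :=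
    ((measurable_deriv f).norm.pow_const 2).ennreal_ofReal
  calc ∫⁻ z in U, ENNReal.ofReal (‖deriv (f ∘ φ) z‖ ^ 2 * W z) ∂μ
      = ∫⁻ z in U, ENNReal.ofReal (‖deriv f (φ z)‖ ^ 2) * ENNReal.ofReal (‖deriv φ z‖ ^ 2) *
          ENNReal.ofReal (W z) ∂μ := by
        refine setLIntegral_congr_fun hU.measurableSet fun z hz => ?_
        rw [deriv_comp z (hf.differentiableAt (hV.mem_nhds (hφUV hz)))
            (hφ.differentiableAt (hU.mem_nhds hz)), norm_mul, mul_pow,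
          ENNReal.ofReal_mul (by positivity), ENNReal.ofReal_mul (by positivity)]
    _ = ∫⁻ w, ENNReal.ofReal (‖deriv f w‖ ^ 2) *
          preimageSum U φ (fun z => ENNReal.ofReal (W z)) w ∂μ :=
        lintegral_comp_mul_norm_deriv_sq_mul μ hU hφ hG hW.ennreal_ofReal
    _ = _ := (setLIntegral_eq_of_support_subset fun w hw => by_contra fun hwV => hw <| by
        rw [preimageSum_eq_zero_of_notMem_image fun ⟨z, hz, hzw⟩ => hwV (hzw ▸ hφUV hz),
          mul_zero]).symm

instance : dA.IsAddHaarMeasure :=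
  Measure.IsAddHaarMeasure.smul _ (by simp) (by simp [Real.pi_pos])

theorem isOpen_unitDisk : IsOpen unitDisk :=
  isOpen_ball

theorem norm_mem_Ico_of_mem_unitDisk {z : ℂ} (hz : z ∈ unitDisk) : ‖z‖ ∈ Ico (0 : ℝ) 1 :=
  ⟨norm_nonneg z, mem_ball_zero_iff.1 hz⟩

theorem IsWeight.radial_nonneg {ω : ℝ → ℝ} (hω : IsWeight ω) {z : ℂ} (hz : z ∈ unitDisk) :
    0 ≤ radial ω z :=
  (hω.pos _ (norm_mem_Ico_of_mem_unitDisk hz)).le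

theorem IsWeight.measurable_domRestrict_radial {ω : ℝ → ℝ} (hω : IsWeight ω) :
    Measurable (unitDisk.domRestrict (radial ω)) :=
  (continuousOn_iff_continuous_domRestrict.1 (hω.smooth.continuousOn.comp
    continuous_norm.continuousOn fun _ => norm_mem_Ico_of_mem_unitDisk)).measurable

/-- Both sides are `0` when the weighted count of preimages is infinite: a non-summable `tsum`
is `0`, and so is `∞.toReal`. -/
theorem nevanlinna_eq_toReal_preimageSum {ω : ℝ → ℝ} (hω : ∀ z ∈ unitDisk, 0 ≤ radial ω z)
    (φ : ℂ → ℂ) (w : ℂ) :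
    Nevanlinna ω φ w =
      (preimageSum unitDisk φ (fun z => ENNReal.ofReal (radial ω z)) w).toReal := by
  rw [preimageSum, ENNReal.tsum_toReal_eq fun _ => ENNReal.ofReal_ne_top]
  exact tsum_congr fun a => (ENNReal.toReal_ofReal (hω a a.2.1)).symm

/-- If `f` is analytic on `𝔻` and `f ∘ φ ∈ H_ω`, then
`‖C_φ f‖²_{H_ω} = |f(φ(0))|² + ∫_𝔻 |f′(z)|² N_{φ,ω}(z) dA(z)`. -/
theorem composition_norm_formula
    (ω : ℝ → ℝ) (hω : IsWeight ω)
    (φ : ℂ → ℂ) (hφd : DifferentiableOn ℂ φ unitDisk) (hφm : MapsTo φ unitDisk unitDisk)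
    (f : ℂ → ℂ) (hf : DifferentiableOn ℂ f unitDisk) (hmem : memHω ω (f ∘ φ)) :
    HωNormSq ω (f ∘ φ) =
      ‖f (φ 0)‖ ^ 2 +
        ∫ z in unitDisk, ‖deriv f z‖ ^ 2 * Nevanlinna ω φ z ∂dA := by
  set P := preimageSum unitDisk φ fun z => ENNReal.ofReal (radial ω z)
  have hlin := lintegral_ofReal_norm_deriv_comp_sq_mul dA isOpen_unitDisk isOpen_unitDisk hf hφd
    hφm hω.measurable_domRestrict_radial
  have hfin : ∫⁻ w in unitDisk, ENNReal.ofReal (‖deriv f w‖ ^ 2) * P w ∂dA ≠ ∞ :=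
    hlin ▸ hmem.2.lintegral_lt_top.ne
  have hPm : AEMeasurable (fun w => ENNReal.ofReal (‖deriv f w‖ ^ 2) * P w)
      (dA.restrict unitDisk) :=
    (((measurable_deriv f).norm.pow_const 2).ennreal_ofReal).aemeasurable.mul
      (aemeasurable_preimageSum_of_differentiableOn dA isOpen_unitDisk hφd
        (W := fun z => ENNReal.ofReal (radial ω z))
        hω.measurable_domRestrict_radial.ennreal_ofReal).restrict
  have hN : ∀ w, ‖deriv f w‖ ^ 2 * Nevanlinna ω φ w =
      (ENNReal.ofReal (‖deriv f w‖ ^ 2) * P w).toReal := fun w => by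
    rw [ENNReal.toReal_mul, ENNReal.toReal_ofReal (by positivity),
      nevanlinna_eq_toReal_preimageSum (fun _ => hω.radial_nonneg)]
  rw [HωNormSq, Function.comp_apply, integral_eq_lintegral_of_nonneg_ae
      (ae_restrict_of_forall_mem isOpen_unitDisk.measurableSet fun z hz =>
        mul_nonneg (sq_nonneg _) (hω.radial_nonneg hz)) hmem.2.aestronglyMeasurable,
    hlin, funext hN, integral_toReal hPm (ae_lt_top' hPm hfin)]
end
end

section
/- Let ω be an admissible weight, let φ be an analytic self-map of 𝔻 with a = φ(0) ≠ 0, and set ψ = σ_a ∘ φ. Then the following are equivalent: (i) there exists c > 0 such that ∫_𝔻 |f′(z)|² (N_{φ,ω}(z)/ω(z)) ω(z) dA(z) ≥ c ∫_𝔻 |f′(z)|² ω(z) dA(z) for all f ∈ H_ω; (ii) there exists c > 0 such that ∫_𝔻 |f′(z)|² (N_{ψ,ω}(z)/ω(z)) ω(z) dA(z) ≥ c ∫_𝔻 |f′(z)|² ω(z) dA(z) for all f ∈ H_ω. -/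
open MeasureTheory Complex Metric Set Filter
open scoped ENNReal InnerProductSpace

noncomputable section

/-!
Post-composing `φ` with the disk automorphism `σ_a` only relabels the preimages:
`N_{σ_a ∘ φ, ω} = N_{φ, ω} ∘ σ_a` on `𝔻`. Substituting `z = σ_a(w)` and replacing `f` by `f ∘ σ_a`
therefore turns the left-hand side of the inequality for `σ_a ∘ φ` into that for `φ`, because the
Dirichlet-type integral `∫ |f'|² G dA` is conformally invariant. On the right-hand side the weight
becomes `ω(σ_a(w))`, which is comparable to `ω(w)`: `1 - |σ_a(w)| ≤ C_a (1 - |w|)`, and (W1), (W2)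
turn this into `ω(|σ_a(w)|) ≤ C_a^{1+δ} ω(|w|)`. As `σ_a` is an involution, the two directions are
the same argument.
-/

section Mobius

variable {a z : ℂ}

theorem mem_unitDisk_iff : z ∈ unitDisk ↔ ‖z‖ < 1 := mem_ball_zero_iff

theorem one_sub_conj_mul_ne_zero (ha : ‖a‖ < 1) (hz : ‖z‖ ≤ 1) :
    1 - (starRingEnd ℂ) a * z ≠ 0 := by
  intro h
  have : ‖(starRingEnd ℂ) a * z‖ = 1 := by rw [← sub_eq_zero.1 h, norm_one]
  rw [norm_mul, Complex.norm_conj] at this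
  nlinarith [norm_nonneg a, norm_nonneg z]

theorem one_sub_norm_mobius_sq_mul (h : 1 - (starRingEnd ℂ) a * z ≠ 0) :
    (1 - ‖mobius a z‖ ^ 2) * ‖1 - (starRingEnd ℂ) a * z‖ ^ 2 = (1 - ‖a‖ ^ 2) * (1 - ‖z‖ ^ 2) := by
  have h' : ‖1 - (starRingEnd ℂ) a * z‖ ^ 2 ≠ 0 := by positivity
  rw [mobius, norm_div, div_pow, sub_mul, div_mul_cancel₀ _ h']
  simp only [← Complex.normSq_eq_norm_sq, Complex.normSq_apply, Complex.sub_re, Complex.sub_im,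
    Complex.mul_re, Complex.mul_im, Complex.one_re, Complex.one_im, Complex.conj_re,
    Complex.conj_im]
  ring

theorem norm_mobius_lt_one (ha : ‖a‖ < 1) (hz : ‖z‖ < 1) : ‖mobius a z‖ < 1 := by
  have : 0 < (1 - ‖mobius a z‖ ^ 2) * ‖1 - (starRingEnd ℂ) a * z‖ ^ 2 := by
    rw [one_sub_norm_mobius_sq_mul (one_sub_conj_mul_ne_zero ha hz.le)]
    exact mul_pos (by nlinarith [norm_nonneg a]) (by nlinarith [norm_nonneg z])
  nlinarith [pos_of_mul_pos_left this (by positivity), norm_nonneg (mobius a z)]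

theorem mobius_mem_unitDisk (ha : ‖a‖ < 1) (hz : z ∈ unitDisk) : mobius a z ∈ unitDisk :=
  mem_unitDisk_iff.2 (norm_mobius_lt_one ha (mem_unitDisk_iff.1 hz))

theorem mobius_mobius (ha : ‖a‖ < 1) (hz : z ∈ unitDisk) : mobius a (mobius a z) = z := by
  have hd := one_sub_conj_mul_ne_zero ha (mem_unitDisk_iff.1 hz).le
  have ha' := one_sub_conj_mul_ne_zero ha ha.le
  have hden : 1 - (starRingEnd ℂ) a * mobius a z
      = (1 - (starRingEnd ℂ) a * a) / (1 - (starRingEnd ℂ) a * z) := by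
    rw [mobius]; field_simp; ring
  have hd' : 1 - z * (starRingEnd ℂ) a ≠ 0 := by rwa [mul_comm]
  rw [mobius, hden, mobius, div_eq_iff (div_ne_zero ha' hd)]
  field_simp
  ring

theorem bijOn_mobius (ha : ‖a‖ < 1) : BijOn (mobius a) unitDisk unitDisk :=
  InvOn.bijOn ⟨fun _ => mobius_mobius ha, fun _ => mobius_mobius ha⟩
    (fun _ => mobius_mem_unitDisk ha) (fun _ => mobius_mem_unitDisk ha)

theorem differentiableAt_mobius (h : 1 - (starRingEnd ℂ) a * z ≠ 0) :
    DifferentiableAt ℂ (mobius a) z := by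
  unfold mobius
  fun_prop (disch := exact h)

theorem one_sub_norm_mobius_le (ha : ‖a‖ < 1) (hz : ‖z‖ < 1) :
    1 - ‖mobius a z‖ ≤ 2 * (1 + ‖a‖) / (1 - ‖a‖) * (1 - ‖z‖) := by
  have hd := one_sub_conj_mul_ne_zero ha hz.le
  have hden : 1 - ‖a‖ ≤ ‖1 - (starRingEnd ℂ) a * z‖ := by
    calc 1 - ‖a‖ ≤ 1 - ‖(starRingEnd ℂ) a * z‖ := by
          rw [norm_mul, Complex.norm_conj]; nlinarith [norm_nonneg a, norm_nonneg z]
      _ ≤ ‖1 - (starRingEnd ℂ) a * z‖ := by simpa using norm_sub_norm_le 1 ((starRingEnd ℂ) a * z)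
  have hσ := norm_mobius_lt_one ha hz
  have ha' : 0 < 1 - ‖a‖ := by linarith
  rw [div_mul_eq_mul_div, le_div_iff₀ ha', ← mul_le_mul_iff_left₀ ha']
  calc (1 - ‖mobius a z‖) * (1 - ‖a‖) * (1 - ‖a‖)
      ≤ (1 - ‖mobius a z‖ ^ 2) * ‖1 - (starRingEnd ℂ) a * z‖ ^ 2 := by
        rw [mul_assoc, ← sq]
        gcongr
        · nlinarith [norm_nonneg (mobius a z)]
        · nlinarith [norm_nonneg (mobius a z)]
    _ = (1 - ‖a‖ ^ 2) * (1 - ‖z‖ ^ 2) := one_sub_norm_mobius_sq_mul hd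
    _ ≤ 2 * (1 + ‖a‖) * (1 - ‖z‖) * (1 - ‖a‖) := by
        have h1t : 0 ≤ 1 - ‖z‖ := by linarith
        have h1a : 0 ≤ 1 + ‖a‖ := by linarith [norm_nonneg a]
        nlinarith [mul_nonneg (mul_nonneg (mul_nonneg ha'.le h1a) h1t) h1t]

end Mobius

section Weight

theorem radial_pos {ω : ℝ → ℝ} (hω : IsWeight ω) {z : ℂ} (hz : z ∈ unitDisk) : 0 < radial ω z :=
  hω.pos _ ⟨norm_nonneg z, mem_unitDisk_iff.1 hz⟩

theorem le_rpow_mul_of_one_sub_le {ω : ℝ → ℝ} {p R s t : ℝ} (hp : 0 ≤ p)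
    (hanti : AntitoneOn ω (Ico 0 1)) (hmono : MonotoneOn (fun r => ω r * (1 - r) ^ (-p)) (Ico 0 1))
    (hs : s ∈ Ico (0:ℝ) 1) (ht : t ∈ Ico (0:ℝ) 1) (hωt : 0 ≤ ω t) (hR : 1 ≤ R)
    (hst : 1 - s ≤ R * (1 - t)) : ω s ≤ R ^ p * ω t := by
  rcases le_or_gt t s with hts | hst'
  · calc ω s ≤ ω t := hanti ht hs hts
      _ ≤ R ^ p * ω t := le_mul_of_one_le_left hωt (Real.one_le_rpow hR hp)
  · have h1s : 0 < 1 - s := by linarith [hs.2]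
    have h1t : 0 < 1 - t := by linarith [ht.2]
    have hratio : (1 - s) / (1 - t) ≤ R := (div_le_iff₀ h1t).2 hst
    calc ω s = ω s * (1 - s) ^ (-p) * (1 - s) ^ p := by
          rw [mul_assoc, ← Real.rpow_add h1s, neg_add_cancel, Real.rpow_zero, mul_one]
      _ ≤ ω t * (1 - t) ^ (-p) * (1 - s) ^ p :=
          mul_le_mul_of_nonneg_right (hmono hs ht hst'.le) (by positivity)
      _ = ((1 - s) / (1 - t)) ^ p * ω t := by
          rw [Real.div_rpow h1s.le h1t.le, Real.rpow_neg h1t.le]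
          ring
      _ ≤ R ^ p * ω t := by gcongr

theorem exists_radial_mobius_le {ω : ℝ → ℝ} (hω : IsAdmissibleWeight ω) {a : ℂ} (ha : ‖a‖ < 1) :
    ∃ K > 0, ∀ z ∈ unitDisk, radial ω (mobius a z) ≤ K * radial ω z := by
  obtain ⟨δ, hδ, hmono⟩ := hω.W2
  have hR : 1 ≤ 2 * (1 + ‖a‖) / (1 - ‖a‖) := by
    rw [le_div_iff₀ (by linarith)]
    linarith [norm_nonneg a]
  refine ⟨(2 * (1 + ‖a‖) / (1 - ‖a‖)) ^ (1 + δ), by positivity, fun z hz => ?_⟩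
  have hz' := mem_unitDisk_iff.1 hz
  exact le_rpow_mul_of_one_sub_le (by linarith) hω.W1 hmono
    ⟨norm_nonneg _, norm_mobius_lt_one ha hz'⟩ ⟨norm_nonneg _, hz'⟩
    (hω.pos _ ⟨norm_nonneg _, hz'⟩).le hR (one_sub_norm_mobius_le ha hz')

end Weight

section ChangeOfVariables

variable {a : ℂ}

theorem measurableSet_unitDisk : MeasurableSet unitDisk := measurableSet_ball

theorem det_restrictScalars_smulRight (d : ℂ) :
    ((ContinuousLinearMap.smulRight (1 : ℂ →L[ℂ] ℂ) d).restrictScalars ℝ).det = ‖d‖ ^ 2 := by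
  simp [ContinuousLinearMap.det, LinearMap.det_restrictScalars, Algebra.norm_complex_eq,
    Complex.normSq_eq_norm_sq]

theorem hasFDerivWithinAt_mobius (ha : ‖a‖ < 1) {z : ℂ} (hz : z ∈ unitDisk) :
    HasFDerivWithinAt (mobius a)
      ((ContinuousLinearMap.smulRight (1 : ℂ →L[ℂ] ℂ) (deriv (mobius a) z)).restrictScalars ℝ)
      unitDisk z :=
  ((differentiableAt_mobius (one_sub_conj_mul_ne_zero ha (mem_unitDisk_iff.1 hz).le)).hasDerivAt
    |>.hasFDerivAt.restrictScalars ℝ).hasFDerivWithinAt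

theorem setIntegral_dA_comp_mobius (ha : ‖a‖ < 1) (F : ℂ → ℝ) :
    ∫ w in unitDisk, ‖deriv (mobius a) w‖ ^ 2 * F (mobius a w) ∂dA = ∫ z in unitDisk, F z ∂dA := by
  simp only [dA, Measure.restrict_smul, integral_smul_measure]
  conv_rhs => rw [← (bijOn_mobius ha).image_eq, integral_image_eq_integral_abs_det_fderiv_smul
    volume measurableSet_unitDisk (fun z hz => hasFDerivWithinAt_mobius ha hz)
    (bijOn_mobius ha).injOn]
  simp only [det_restrictScalars_smulRight, abs_sq, smul_eq_mul]

theorem integrableOn_dA_comp_mobius (ha : ‖a‖ < 1) {F : ℂ → ℝ}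
    (hF : IntegrableOn F unitDisk dA) :
    IntegrableOn (fun w => ‖deriv (mobius a) w‖ ^ 2 * F (mobius a w)) unitDisk dA := by
  have hπ : (ENNReal.ofReal Real.pi)⁻¹ ≠ 0 := ENNReal.inv_ne_zero.2 ENNReal.ofReal_ne_top
  have hπ' : (ENNReal.ofReal Real.pi)⁻¹ ≠ ∞ := ENNReal.inv_ne_top.2 (by simp [Real.pi_pos])
  rw [IntegrableOn, dA, Measure.restrict_smul, integrable_smul_measure hπ hπ',
    ← (bijOn_mobius ha).image_eq] at hF
  have := (integrableOn_image_iff_integrableOn_abs_det_fderiv_smul volume measurableSet_unitDisk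
    (fun z hz => hasFDerivWithinAt_mobius ha hz) (bijOn_mobius ha).injOn F).1 hF
  simp only [det_restrictScalars_smulRight, abs_sq, smul_eq_mul] at this
  rwa [IntegrableOn, dA, Measure.restrict_smul, integrable_smul_measure hπ hπ']

end ChangeOfVariables

section Composition

variable {a : ℂ} {f : ℂ → ℂ}

theorem DifferentiableOn.comp_mobius (hf : DifferentiableOn ℂ f unitDisk) (ha : ‖a‖ < 1) :
    DifferentiableOn ℂ (f ∘ mobius a) unitDisk :=
  hf.comp (fun _ hz => (differentiableAt_mobius
    (one_sub_conj_mul_ne_zero ha (mem_unitDisk_iff.1 hz).le)).differentiableWithinAt)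
    (fun _ => mobius_mem_unitDisk ha)

theorem deriv_comp_mobius (hf : DifferentiableOn ℂ f unitDisk) (ha : ‖a‖ < 1) {w : ℂ}
    (hw : w ∈ unitDisk) : deriv (f ∘ mobius a) w = deriv f (mobius a w) * deriv (mobius a) w :=
  deriv_comp w (hf.differentiableAt (isOpen_ball.mem_nhds (mobius_mem_unitDisk ha hw)))
    (differentiableAt_mobius (one_sub_conj_mul_ne_zero ha (mem_unitDisk_iff.1 hw).le))

theorem setIntegral_norm_deriv_comp_mobius_sq_mul (hf : DifferentiableOn ℂ f unitDisk)
    (ha : ‖a‖ < 1) (G : ℂ → ℝ) :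
    ∫ w in unitDisk, ‖deriv (f ∘ mobius a) w‖ ^ 2 * G (mobius a w) ∂dA
      = ∫ z in unitDisk, ‖deriv f z‖ ^ 2 * G z ∂dA := by
  rw [← setIntegral_dA_comp_mobius ha fun z => ‖deriv f z‖ ^ 2 * G z]
  refine setIntegral_congr_fun measurableSet_unitDisk fun w hw => ?_
  rw [deriv_comp_mobius hf ha hw, norm_mul, mul_pow]
  ring

theorem IntegrableOn.norm_deriv_comp_mobius_sq_mul {G : ℂ → ℝ}
    (hG : IntegrableOn (fun z => ‖deriv f z‖ ^ 2 * G z) unitDisk dA)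
    (hf : DifferentiableOn ℂ f unitDisk) (ha : ‖a‖ < 1) :
    IntegrableOn (fun w => ‖deriv (f ∘ mobius a) w‖ ^ 2 * G (mobius a w)) unitDisk dA := by
  refine (integrableOn_dA_comp_mobius ha hG).congr_fun (fun w hw => ?_) measurableSet_unitDisk
  rw [deriv_comp_mobius hf ha hw, norm_mul, mul_pow]
  ring

theorem continuousOn_norm_deriv_sq_mul_radial {ω : ℝ → ℝ} (hω : ContinuousOn ω (Ico 0 1))
    (hf : DifferentiableOn ℂ f unitDisk) :
    ContinuousOn (fun z => ‖deriv f z‖ ^ 2 * radial ω z) unitDisk :=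
  (((hf.analyticOnNhd isOpen_ball).deriv).continuousOn.norm.pow 2).mul
    (hω.comp continuous_norm.continuousOn fun z hz => ⟨norm_nonneg z, mem_unitDisk_iff.1 hz⟩)

theorem memHω_comp_mobius {ω : ℝ → ℝ} (hω : IsAdmissibleWeight ω) (ha : ‖a‖ < 1)
    (hf : memHω ω f) : memHω ω (f ∘ mobius a) := by
  obtain ⟨K, -, hωK⟩ := exists_radial_mobius_le hω ha
  have hdiff := hf.1.comp_mobius ha
  refine ⟨hdiff, Integrable.mono'
    ((IntegrableOn.norm_deriv_comp_mobius_sq_mul hf.2 hf.1 ha).const_mul K)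
    ((continuousOn_norm_deriv_sq_mul_radial hω.smooth.continuousOn hdiff).aestronglyMeasurable
      measurableSet_unitDisk) ?_⟩
  filter_upwards [ae_restrict_mem measurableSet_unitDisk] with w hw
  have hω_le : radial ω w ≤ K * radial ω (mobius a w) := by
    simpa only [mobius_mobius ha hw] using hωK _ (mobius_mem_unitDisk ha hw)
  rw [Real.norm_eq_abs, abs_of_nonneg (mul_nonneg (sq_nonneg _) (radial_pos hω.toIsWeight hw).le)]
  calc ‖deriv (f ∘ mobius a) w‖ ^ 2 * radial ω w
      ≤ ‖deriv (f ∘ mobius a) w‖ ^ 2 * (K * radial ω (mobius a w)) := by gcongr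
    _ = K * (‖deriv (f ∘ mobius a) w‖ ^ 2 * radial ω (mobius a w)) := by ring

end Composition

section Nevanlinna

variable {ω : ℝ → ℝ} {a z : ℂ} {χ : ℂ → ℂ}

theorem nevanlinna_eq_of_preimage_iff {χ' : ℂ → ℂ} {z' : ℂ}
    (h : ∀ w ∈ unitDisk, χ w = z ↔ χ' w = z') : Nevanlinna ω χ z = Nevanlinna ω χ' z' :=
  (Equiv.subtypeEquivRight fun w => and_congr_right (h w)).tsum_eq
    (fun w : {w // w ∈ unitDisk ∧ χ' w = z'} => radial ω w)

theorem nevanlinna_mobius_comp (ha : ‖a‖ < 1) (hχ : MapsTo χ unitDisk unitDisk)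
    (hz : z ∈ unitDisk) : Nevanlinna ω (mobius a ∘ χ) z = Nevanlinna ω χ (mobius a z) :=
  nevanlinna_eq_of_preimage_iff fun w hw => by
    constructor
    · rintro rfl
      exact (mobius_mobius ha (hχ hw)).symm
    · rintro h
      rw [Function.comp_apply, h, mobius_mobius ha hz]

theorem nevanlinna_eq_mobius_comp_mobius (ha : ‖a‖ < 1) (hχ : MapsTo χ unitDisk unitDisk)
    (hz : z ∈ unitDisk) : Nevanlinna ω χ z = Nevanlinna ω (mobius a ∘ χ) (mobius a z) := by
  rw [nevanlinna_mobius_comp ha hχ (mobius_mem_unitDisk ha hz), mobius_mobius ha hz]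

end Nevanlinna

def ClosedRangeEstimate (ω : ℝ → ℝ) (N : ℂ → ℝ) : Prop :=
  ∃ c > (0:ℝ), ∀ f : ℂ → ℂ, memHω ω f →
    (∫ z in unitDisk, ‖deriv f z‖ ^ 2 * (N z / radial ω z) * radial ω z ∂dA) ≥
      c * ∫ z in unitDisk, ‖deriv f z‖ ^ 2 * radial ω z ∂dA

theorem setIntegral_mul_div_radial_mul {ω : ℝ → ℝ} (hω : IsWeight ω) (F N : ℂ → ℝ) :
    ∫ z in unitDisk, F z * (N z / radial ω z) * radial ω z ∂dA = ∫ z in unitDisk, F z * N z ∂dA :=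
  setIntegral_congr_fun measurableSet_unitDisk fun z hz => by
    rw [mul_assoc, div_mul_cancel₀ _ (radial_pos hω hz).ne']

theorem ClosedRangeEstimate.of_eqOn_comp_mobius {ω : ℝ → ℝ} {N N' : ℂ → ℝ} {a : ℂ}
    (hω : IsAdmissibleWeight ω) (ha : ‖a‖ < 1) (hN : EqOn N' (N ∘ mobius a) unitDisk)
    (h : ClosedRangeEstimate ω N) : ClosedRangeEstimate ω N' := by
  obtain ⟨c, hc, hest⟩ := h
  obtain ⟨K, hK, hωK⟩ := exists_radial_mobius_le hω ha
  refine ⟨c / K, by positivity, fun f hf => ?_⟩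
  set g := f ∘ mobius a
  have hg := hest g (memHω_comp_mobius hω ha hf)
  rw [setIntegral_mul_div_radial_mul hω.toIsWeight] at hg ⊢
  have hcount : ∫ z in unitDisk, ‖deriv f z‖ ^ 2 * N' z ∂dA
      = ∫ w in unitDisk, ‖deriv g w‖ ^ 2 * N w ∂dA :=
    calc _ = ∫ z in unitDisk, ‖deriv f z‖ ^ 2 * N (mobius a z) ∂dA :=
          setIntegral_congr_fun measurableSet_unitDisk fun z hz => by rw [hN hz]; rfl
      _ = ∫ w in unitDisk, ‖deriv g w‖ ^ 2 * N (mobius a (mobius a w)) ∂dA :=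
          (setIntegral_norm_deriv_comp_mobius_sq_mul hf.1 ha (N ∘ mobius a)).symm
      _ = _ := setIntegral_congr_fun measurableSet_unitDisk fun w hw => by
          rw [mobius_mobius ha hw]
  have henergy : ∫ z in unitDisk, ‖deriv f z‖ ^ 2 * radial ω z ∂dA
      ≤ K * ∫ w in unitDisk, ‖deriv g w‖ ^ 2 * radial ω w ∂dA :=
    calc _ = ∫ w in unitDisk, ‖deriv g w‖ ^ 2 * radial ω (mobius a w) ∂dA :=
          (setIntegral_norm_deriv_comp_mobius_sq_mul hf.1 ha (radial ω)).symm
      _ ≤ ∫ w in unitDisk, K * (‖deriv g w‖ ^ 2 * radial ω w) ∂dA :=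
          setIntegral_mono_on (IntegrableOn.norm_deriv_comp_mobius_sq_mul hf.2 hf.1 ha)
            ((memHω_comp_mobius hω ha hf).2.const_mul K) measurableSet_unitDisk
            fun w hw => by
              rw [mul_left_comm]
              exact mul_le_mul_of_nonneg_left (hωK w hw) (sq_nonneg _)
      _ = _ := integral_const_mul K _
  calc c / K * ∫ z in unitDisk, ‖deriv f z‖ ^ 2 * radial ω z ∂dA
      ≤ c / K * (K * ∫ w in unitDisk, ‖deriv g w‖ ^ 2 * radial ω w ∂dA) := by gcongr
    _ = c * ∫ w in unitDisk, ‖deriv g w‖ ^ 2 * radial ω w ∂dA := by field_simp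
    _ ≤ _ := hcount ▸ hg

theorem closed_range_inequality_equiv_general
    (ω : ℝ → ℝ) (hω : IsAdmissibleWeight ω)
    (φ : ℂ → ℂ) (hφm : MapsTo φ unitDisk unitDisk) :
    (∃ c > (0:ℝ), ∀ f : ℂ → ℂ, memHω ω f →
        (∫ z in unitDisk,
            ‖deriv f z‖ ^ 2 * (Nevanlinna ω φ z / radial ω z) * radial ω z ∂dA) ≥
          c * ∫ z in unitDisk, ‖deriv f z‖ ^ 2 * radial ω z ∂dA) ↔
    (∃ c > (0:ℝ), ∀ f : ℂ → ℂ, memHω ω f →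
        (∫ z in unitDisk,
            ‖deriv f z‖ ^ 2 *
              (Nevanlinna ω (fun z => mobius (φ 0) (φ z)) z / radial ω z) * radial ω z ∂dA) ≥
          c * ∫ z in unitDisk, ‖deriv f z‖ ^ 2 * radial ω z ∂dA) := by
  have ha : ‖φ 0‖ < 1 := mem_unitDisk_iff.1 (hφm (mem_ball_self one_pos))
  constructor
  · exact ClosedRangeEstimate.of_eqOn_comp_mobius hω ha fun z hz =>
      nevanlinna_mobius_comp ha hφm hz
  · exact ClosedRangeEstimate.of_eqOn_comp_mobius hω ha fun z hz =>
      nevanlinna_eq_mobius_comp_mobius ha hφm hz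

/-- For an admissible weight `ω`, an analytic self-map `φ` of `𝔻` with
`a = φ(0) ≠ 0`, and `ψ = σ_a ∘ φ`, the closed-range inequality for `φ` holds iff it holds
for `ψ`. -/
theorem closed_range_inequality_equiv
    (ω : ℝ → ℝ) (hω : IsAdmissibleWeight ω)
    (φ : ℂ → ℂ) (hφd : DifferentiableOn ℂ φ unitDisk) (hφm : MapsTo φ unitDisk unitDisk)
    (ha : φ 0 ≠ 0) :
    (∃ c > (0:ℝ), ∀ f : ℂ → ℂ, memHω ω f →
        (∫ z in unitDisk,
            ‖deriv f z‖ ^ 2 * (Nevanlinna ω φ z / radial ω z) * radial ω z ∂dA) ≥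
          c * ∫ z in unitDisk, ‖deriv f z‖ ^ 2 * radial ω z ∂dA) ↔
    (∃ c > (0:ℝ), ∀ f : ℂ → ℂ, memHω ω f →
        (∫ z in unitDisk,
            ‖deriv f z‖ ^ 2 *
              (Nevanlinna ω (fun z => mobius (φ 0) (φ z)) z / radial ω z) * radial ω z ∂dA) ≥
          c * ∫ z in unitDisk, ‖deriv f z‖ ^ 2 * radial ω z ∂dA) :=
  closed_range_inequality_equiv_general ω hω φ hφm

end
end
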